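/- arXiv:1509.05857 — 3 statements merged into one kernel-verified Lean document; each statement's English description precedes it below -/
import Mathlib

section
/- For every ε > 0, if G is a C4-free graph on n vertices with minimum degree at least n/2 and G contains an independent set of size at least 3/ε + 1, then G contains a clique of size at least (1 − ε)n/4. -/
/-
The common neighbourhood of two non-adjacent vertices of a C4-free graph is a clique, so it
suffices to find two vertices of the independent set `S` with many common neighbours. Let `d w`
be the number of neighbours of `w` in `S`, with `s = |S|` and `n = |V|`. Then `∑ d w` is the
total degree of `S`, at least `s n / 2`, while `∑ d w (d w - 1)` counts pairs of distinct vertices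
of `S` with a common neighbour, so it is at most `s (s - 1)` times the largest codegree `c`.
Cauchy–Schwarz gives `(∑ d w)² ≤ n ∑ (d w)²`, whence `n (s - 2) ≤ 4 (s - 1) c`, and
`(s - 2) / (s - 1) ≥ 1 - ε` as soon as `s ≥ 1 / ε + 1`.
-/

open SimpleGraph
open scoped Classical

/-- `G` contains no induced 4-cycle. -/
def IsC4Free {V : Type*} (G : SimpleGraph V) : Prop :=
  ∀ a b c d : V, a ≠ c → b ≠ d → G.Adj a b → G.Adj b c → G.Adj c d → G.Adj d a →
    ¬G.Adj a c → ¬G.Adj b d → False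

/-- A set of pairwise non-adjacent vertices. -/
def IsIndepSet {V : Type*} (G : SimpleGraph V) (s : Set V) : Prop :=
  ∀ ⦃x⦄, x ∈ s → ∀ ⦃y⦄, y ∈ s → x ≠ y → ¬G.Adj x y

/-- The independence number: the clique number of the complement. -/
noncomputable def indepNum {V : Type*} (G : SimpleGraph V) : ℕ := Gᶜ.cliqueNum

open Finset

theorem IsC4Free.isClique_commonNeighbors {V : Type*} {G : SimpleGraph V} (hG : IsC4Free G)
    {u v : V} (huv : u ≠ v) (hadj : ¬G.Adj u v) : G.IsClique (G.commonNeighbors u v) :=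
  fun x hx y hy hxy => by_contra fun hxy' =>
    hG x u y v hxy huv hx.1.symm hy.1 hy.2.symm hx.2 hxy' hadj

theorem Finset.cast_card_offDiag {α : Type*} [DecidableEq α] (s : Finset α) :
    (#s.offDiag : ℝ) = #s * #s - #s := by
  rw [offDiag_card, Nat.cast_sub (Nat.le_mul_self _), Nat.cast_mul]

namespace SimpleGraph

variable {V : Type*} [Fintype V] (G : SimpleGraph V) [DecidableRel G.Adj]

theorem sum_card_neighborFinset_inter (S : Finset V) :
    ∑ w, #(G.neighborFinset w ∩ S) = ∑ u ∈ S, G.degree u := by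
  convert (sum_card_bipartiteAbove_eq_sum_card_bipartiteBelow (s := S) (t := univ)
    (r := G.Adj)).symm using 3 with w _ u _
  · ext u
    simp [bipartiteBelow, adj_comm, and_comm]
  · rw [← card_neighborFinset_eq_degree, neighborFinset_eq_filter]
    rfl

theorem sum_card_offDiag_neighborFinset_inter (S : Finset V) :
    ∑ w, #(G.neighborFinset w ∩ S).offDiag =
      ∑ p ∈ S.offDiag, #(G.neighborFinset p.1 ∩ G.neighborFinset p.2) := by
  convert (sum_card_bipartiteAbove_eq_sum_card_bipartiteBelow (s := S.offDiag) (t := univ)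
    (r := fun p w => G.Adj p.1 w ∧ G.Adj p.2 w)).symm using 3 with w _ p _
  · ext ⟨a, b⟩
    simp [adj_comm, bipartiteBelow]
    tauto
  · ext w
    simp [bipartiteAbove]

theorem sum_degree_mul_sub_card_le (S : Finset V) :
    (∑ u ∈ S, G.degree u : ℝ) * ((∑ u ∈ S, G.degree u : ℝ) - Fintype.card V) ≤
      Fintype.card V *
        ∑ p ∈ S.offDiag, (#(G.neighborFinset p.1 ∩ G.neighborFinset p.2) : ℝ) := by
  set d : V → ℝ := fun w => #(G.neighborFinset w ∩ S)
  have hD : (∑ u ∈ S, G.degree u : ℝ) = ∑ w, d w := by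
    simp only [d]
    exact_mod_cast (G.sum_card_neighborFinset_inter S).symm
  have hsq : ∑ w, d w ^ 2 =
      ∑ p ∈ S.offDiag, (#(G.neighborFinset p.1 ∩ G.neighborFinset p.2) : ℝ) +
        ∑ w, d w := by
    rw [← Nat.cast_sum, ← G.sum_card_offDiag_neighborFinset_inter, Nat.cast_sum,
      ← sum_add_distrib]
    simp only [d, cast_card_offDiag]
    ring_nf
  have hCS : (∑ w, d w) ^ 2 ≤ Fintype.card V * ∑ w, d w ^ 2 := sq_sum_le_card_mul_sum_sq
  rw [hD]
  nlinarith

theorem exists_sum_degree_mul_sub_card_le (S : Finset V) (hS : 1 < #S) :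
    ∃ u ∈ S, ∃ v ∈ S, u ≠ v ∧
      (∑ u ∈ S, G.degree u : ℝ) * ((∑ u ∈ S, G.degree u : ℝ) - Fintype.card V) ≤
        Fintype.card V * (#S * (#S - 1)) * #(G.neighborFinset u ∩ G.neighborFinset v) := by
  obtain ⟨a, ha, b, hb, hab⟩ := one_lt_card.1 hS
  obtain ⟨⟨u, v⟩, hp, hmax⟩ := exists_max_image S.offDiag
    (fun p => #(G.neighborFinset p.1 ∩ G.neighborFinset p.2))
    ⟨(a, b), mem_offDiag.2 ⟨ha, hb, hab⟩⟩
  obtain ⟨hu, hv, huv⟩ := mem_offDiag.1 hp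
  refine ⟨u, hu, v, hv, huv, (G.sum_degree_mul_sub_card_le S).trans ?_⟩
  have hsum : (∑ p ∈ S.offDiag, #(G.neighborFinset p.1 ∩ G.neighborFinset p.2) : ℝ) ≤
      #S.offDiag * #(G.neighborFinset u ∩ G.neighborFinset v) := by
    exact_mod_cast sum_le_card_nsmul _ _ _ hmax
  rw [cast_card_offDiag] at hsum
  rw [mul_assoc]
  gcongr
  linarith

end SimpleGraph

theorem one_sub_mul_div_four_le {ε n s D c : ℝ} (hn : 0 ≤ n) (hc : 0 ≤ c) (hs : 1 < s)
    (hD : s * (n / 2) ≤ D) (hDc : D * (D - n) ≤ n * (s * (s - 1)) * c)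
    (hεs : 1 ≤ ε * (s - 1)) :
    (1 - ε) * n / 4 ≤ c := by
  have hmono : s * (n / 2) * (s * (n / 2) - n) ≤ D * (D - n) := by
    nlinarith [mul_nonneg (sub_nonneg.2 hD) (by nlinarith : 0 ≤ D + s * (n / 2) - n)]
  have hcancel : n * (s - 2) / 4 ≤ (s - 1) * c := by
    rcases hn.eq_or_lt with rfl | hn
    · nlinarith
    · have hns : 0 < n * s := by positivity
      nlinarith
  have hs1 : 0 < s - 1 := by linarith
  nlinarith

theorem stmt4 (ε : ℝ) (hε : 0 < ε) {V : Type*} [Fintype V] (G : SimpleGraph V)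
    [DecidableRel G.Adj] (hC4 : IsC4Free G)
    (hδ : (Fintype.card V : ℝ) / 2 ≤ (G.minDegree : ℝ))
    (S : Finset V) (hS : _root_.IsIndepSet G ↑S) (ht : 3 / ε + 1 ≤ (S.card : ℝ)) :
    ∃ s : Finset V, G.IsClique ↑s ∧
      (1 - ε) * (Fintype.card V : ℝ) / 4 ≤ (s.card : ℝ) := by
  have h3ε : 3 ≤ ε * (#S - 1) := by
    rw [mul_comm, ← div_le_iff₀ hε]
    linarith
  have hS1 : 1 < #S := by
    have : (1 : ℝ) < #S := by linarith [div_pos three_pos hε]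
    exact_mod_cast this
  obtain ⟨u, hu, v, hv, huv, hcount⟩ := G.exists_sum_degree_mul_sub_card_le S hS1
  refine ⟨G.neighborFinset u ∩ G.neighborFinset v, ?_, ?_⟩
  · simpa [commonNeighbors_eq] using hC4.isClique_commonNeighbors huv (hS hu hv huv)
  · have hdeg : (#S : ℝ) * (Fintype.card V / 2) ≤ ∑ u ∈ S, (G.degree u : ℝ) := by
      rw [← nsmul_eq_mul, ← sum_const]
      exact sum_le_sum fun w _ => hδ.trans (by exact_mod_cast G.minDegree_le_degree w)
    exact one_sub_mul_div_four_le (by positivity) (by positivity) (by exact_mod_cast hS1) hdeg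
      hcount (by linarith)
end

section
/- If G is a C4-free graph on n vertices with independence number α, then ω(G) ≥ n / C(α+1, 2). -/
open SimpleGraph
open scoped Classical

/-!
Fix a maximum independent set `S`, of size `α`. A vertex outside `S` with two distinct
neighbours `x, y ∈ S` lies in their common neighbourhood, which is a clique: two non-adjacent
vertices in it would close an induced 4-cycle with the non-adjacent `x` and `y`. Every other
vertex lies, for some `x ∈ S`, among the vertices outside `S \ {x}` with no neighbour in it; this
is a clique too, since two non-adjacent vertices in it would extend `S \ {x}` to an independent set
of size `α + 1`. So `V` is covered by `C(α, 2) + α = C(α + 1, 2)` cliques.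
-/

namespace SimpleGraph

variable {V : Type*} (G : SimpleGraph V)

noncomputable def commonNeighborFinset [Fintype V] (p : Finset V) : Finset V :=
  {v | ∀ x ∈ p, G.Adj x v}

noncomputable def indepExtenders [Fintype V] (R : Finset V) : Finset V :=
  {v | v ∉ R ∧ ∀ r ∈ R, ¬G.Adj v r}

variable {G}

theorem isIndepSet_insert {a : V} {s : Set V} :
    G.IsIndepSet (insert a s) ↔ G.IsIndepSet s ∧ ∀ b ∈ s, a ≠ b → ¬G.Adj a b := by
  simp_rw [← isClique_compl, isClique_insert, compl_adj]
  grind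

theorem _root_.IsC4Free.isClique_commonNeighbors_s10 (hC4 : IsC4Free G) {x y : V} (hxy : x ≠ y)
    (hnadj : ¬G.Adj x y) : G.IsClique (G.commonNeighbors x y) := by
  intro u hu v hv huv
  by_contra h
  rw [mem_commonNeighbors] at hu hv
  exact hC4 u x v y huv hxy hu.1.symm hv.1 hv.2.symm hu.2 h hnadj

variable [Fintype V]

@[simp]
theorem mem_commonNeighborFinset {p : Finset V} {v : V} :
    v ∈ G.commonNeighborFinset p ↔ ∀ x ∈ p, G.Adj x v := by
  simp [commonNeighborFinset]

@[simp]
theorem mem_indepExtenders {R : Finset V} {v : V} :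
    v ∈ G.indepExtenders R ↔ v ∉ R ∧ ∀ r ∈ R, ¬G.Adj v r := by
  simp [indepExtenders]

theorem _root_.IsC4Free.isClique_commonNeighborFinset (hC4 : IsC4Free G) {S p : Finset V}
    (hS : G.IsIndepSet S) (hp : p ∈ S.powersetCard 2) :
    G.IsClique (G.commonNeighborFinset p) := by
  obtain ⟨hpS, hp2⟩ := Finset.mem_powersetCard.1 hp
  obtain ⟨x, y, hxy, rfl⟩ := Finset.card_eq_two.1 hp2
  have hnadj : ¬G.Adj x y := hS (hpS (by simp)) (hpS (by simp)) hxy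
  convert hC4.isClique_commonNeighbors_s10 hxy hnadj using 1
  ext v
  simp [mem_commonNeighbors]

theorem IsIndepSet.isClique_indepExtenders {R : Finset V} (hR : G.IsIndepSet R)
    (hα : G.indepNum < R.card + 2) : G.IsClique (G.indepExtenders R) := by
  intro u hu v hv huv
  by_contra hnadj
  rw [Finset.mem_coe, mem_indepExtenders] at hu hv
  have huR : u ∉ insert v R := by simpa [huv] using hu.1
  have hind : G.IsIndepSet (insert u (insert v R) : Finset V) := by
    rw [Finset.coe_insert, Finset.coe_insert, isIndepSet_insert, isIndepSet_insert]
    refine ⟨⟨hR, fun r hr _ => hv.2 r hr⟩, ?_⟩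
    rintro w (rfl | hw) -
    · exact hnadj
    · exact hu.2 w hw
  have := hind.card_le_indepNum
  rw [Finset.card_insert_of_notMem huR, Finset.card_insert_of_notMem hv.1] at this
  omega

theorem IsNIndepSet.exists_adj_of_notMem {S : Finset V} (hS : G.IsNIndepSet G.indepNum S)
    {v : V} (hv : v ∉ S) : ∃ x ∈ S, G.Adj v x := by
  by_contra! h
  have hind : G.IsIndepSet (insert v S : Finset V) := by
    rw [Finset.coe_insert, isIndepSet_insert]
    exact ⟨hS.isIndepSet, fun x hx _ => h x hx⟩
  have := hind.card_le_indepNum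
  rw [Finset.card_insert_of_notMem hv, hS.card_eq] at this
  omega

theorem IsNIndepSet.mem_indepExtenders_erase {S : Finset V} (hS : G.IsNIndepSet G.indepNum S)
    {v : V} (hv : ∀ x ∈ S, ∀ y ∈ S, G.Adj x v → G.Adj y v → x = y) :
    ∃ x ∈ S, v ∈ G.indepExtenders (S.erase x) := by
  by_cases hvS : v ∈ S
  · refine ⟨v, hvS, mem_indepExtenders.2 ⟨by simp, fun r hr => ?_⟩⟩
    exact hS.isIndepSet hvS (Finset.mem_of_mem_erase hr) (Finset.ne_of_mem_erase hr).symm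
  · obtain ⟨x, hx, hvx⟩ := hS.exists_adj_of_notMem hvS
    refine ⟨x, hx, mem_indepExtenders.2 ⟨fun h => hvS (Finset.mem_of_mem_erase h), fun r hr hvr => ?_⟩⟩
    exact Finset.ne_of_mem_erase hr (hv r (Finset.mem_of_mem_erase hr) x hx hvr.symm hvx.symm)

theorem IsNIndepSet.univ_subset_biUnion {S : Finset V} (hS : G.IsNIndepSet G.indepNum S) :
    (Finset.univ : Finset V) ⊆ (S.powersetCard 2).biUnion G.commonNeighborFinset ∪
      S.biUnion fun x => G.indepExtenders (S.erase x) := by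
  intro v _
  simp only [Finset.mem_union, Finset.mem_biUnion]
  by_cases htwo : ∃ x ∈ S, ∃ y ∈ S, x ≠ y ∧ G.Adj x v ∧ G.Adj y v
  · obtain ⟨x, hx, y, hy, hxy, hxv, hyv⟩ := htwo
    refine Or.inl ⟨{x, y}, ?_, by simp [hxv, hyv]⟩
    simp [Finset.mem_powersetCard, Finset.insert_subset_iff, hx, hy, hxy]
  · refine Or.inr (hS.mem_indepExtenders_erase fun x hx y hy hxv hyv => ?_)
    by_contra hxy
    exact htwo ⟨x, hx, y, hy, hxy, hxv, hyv⟩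

theorem card_le_cliqueNum_mul_choose (hC4 : IsC4Free G) :
    Fintype.card V ≤ G.cliqueNum * (G.indepNum + 1).choose 2 := by
  obtain ⟨S, hS⟩ := G.exists_isNIndepSet_indepNum
  calc Fintype.card V
      ≤ ((S.powersetCard 2).biUnion G.commonNeighborFinset ∪
          S.biUnion fun x => G.indepExtenders (S.erase x)).card :=
        Finset.card_le_card hS.univ_subset_biUnion
    _ ≤ (S.powersetCard 2).card * G.cliqueNum + S.card * G.cliqueNum := by
        refine (Finset.card_union_le _ _).trans (add_le_add ?_ ?_)
        · exact Finset.card_biUnion_le_card_mul _ _ _ fun p hp =>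
            (hC4.isClique_commonNeighborFinset hS.isIndepSet hp).card_le_cliqueNum
        · refine Finset.card_biUnion_le_card_mul _ _ _ fun x hx => ?_
          refine (IsIndepSet.isClique_indepExtenders ?_ ?_).card_le_cliqueNum
          · exact hS.isIndepSet.mono (Finset.coe_subset.2 (Finset.erase_subset _ _))
          · rw [Finset.card_erase_of_mem hx, hS.card_eq]
            omega
    _ = G.cliqueNum * (G.indepNum + 1).choose 2 := by
        rw [Finset.card_powersetCard, hS.card_eq, Nat.choose_succ_succ', Nat.choose_one_right]
        ring

end SimpleGraph

theorem stmt10 {V : Type*} [Fintype V] (G : SimpleGraph V) (hC4 : IsC4Free G) :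
    (G.cliqueNum : ℝ) ≥ (Fintype.card V : ℝ) / ((_root_.indepNum G + 1).choose 2 : ℝ) := by
  rw [_root_.indepNum, cliqueNum_compl]
  exact div_le_of_le_mul₀ (by positivity) (by positivity)
    (by exact_mod_cast G.card_le_cliqueNum_mul_choose hC4)
end

section
/- If G is a C4-free graph on n vertices with minimum degree δ(G) ≥ n/2, then ω(G) ≥ n/12. -/
open SimpleGraph
open scoped Classical

/-!
Two non-adjacent vertices of a C4-free graph have a clique as common neighbourhood. If the
complement contains a triangle `x, y, z`, the three neighbourhoods have size at least `n / 2` and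
miss `x, y, z`, so inclusion–exclusion forces one pairwise common neighbourhood to have size
about `n / 6`. Otherwise every non-neighbourhood is a clique, and for non-adjacent `u, v` the
vertex set is covered by the two non-neighbourhoods of `u, v` and their common neighbourhood.
-/

open Finset

lemma Finset.card_add_card_add_card_le {α : Type*} [DecidableEq α] (A B C : Finset α) :
    #A + #B + #C ≤ #(A ∪ B ∪ C) + (#(A ∩ B) + #(A ∩ C) + #(B ∩ C)) := by
  have hAB := card_union_add_card_inter A B
  have hABC := card_union_add_card_inter (A ∪ B) C
  rw [union_inter_distrib_right] at hABC
  have := card_union_le (A ∩ C) (B ∩ C)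
  omega

namespace SimpleGraph

variable {V : Type*} {G : SimpleGraph V}

theorem IsC4Free.isClique_commonNeighbors (hC4 : IsC4Free G) {u v : V} (hne : u ≠ v)
    (huv : ¬G.Adj u v) : G.IsClique (G.commonNeighbors u v) := by
  rintro x ⟨hux, hvx⟩ y ⟨huy, hvy⟩ hxy
  by_contra hnxy
  exact hC4 u x v y hne hxy hux hvx.symm hvy huy.symm huv hnxy

theorem isClique_compl_neighborSet_of_compl_cliqueFree (h : Gᶜ.CliqueFree 3) (v : V) :
    G.IsClique (Gᶜ.neighborSet v) :=
  (isIndepSet_compl G).1 (isIndepSet_neighborSet_of_triangleFree Gᶜ h v)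

variable [Fintype V] [DecidableRel G.Adj]

theorem IsC4Free.card_inter_neighborFinset_le_cliqueNum (hC4 : IsC4Free G) {u v : V}
    (huv : Gᶜ.Adj u v) : #(G.neighborFinset u ∩ G.neighborFinset v) ≤ G.cliqueNum := by
  obtain ⟨hne, hnadj⟩ := (compl_adj G u v).1 huv
  refine IsClique.card_le_cliqueNum (tc := (hC4.isClique_commonNeighbors hne hnadj).subset ?_)
  intro w hw
  simpa [mem_commonNeighbors] using hw

theorem IsC4Free.degree_add_degree_add_degree_add_three_le (hC4 : IsC4Free G) {x y z : V}
    (hxy : Gᶜ.Adj x y) (hxz : Gᶜ.Adj x z) (hyz : Gᶜ.Adj y z) :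
    G.degree x + G.degree y + G.degree z + 3 ≤ Fintype.card V + 3 * G.cliqueNum := by
  set N := G.neighborFinset
  have hdisj : Disjoint (N x ∪ N y ∪ N z) {x, y, z} := by
    simp only [compl_adj] at hxy hxz hyz
    simp [N, disjoint_insert_right, adj_comm, hxy.2, hxz.2, hyz.2]
  have hcard3 : #({x, y, z} : Finset V) = 3 :=
    card_eq_three.2 ⟨x, y, z, hxy.ne, hxz.ne, hyz.ne, rfl⟩
  have hunion : #(N x ∪ N y ∪ N z) + 3 ≤ Fintype.card V := by
    rw [← hcard3, ← card_union_of_disjoint hdisj]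
    exact card_le_univ _
  have hie := card_add_card_add_card_le (N x) (N y) (N z)
  have := hC4.card_inter_neighborFinset_le_cliqueNum hxy
  have := hC4.card_inter_neighborFinset_le_cliqueNum hxz
  have := hC4.card_inter_neighborFinset_le_cliqueNum hyz
  simp only [N, card_neighborFinset_eq_degree] at hie hunion
  omega

theorem IsC4Free.card_le_three_mul_cliqueNum (hC4 : IsC4Free G) (h : Gᶜ.CliqueFree 3) :
    Fintype.card V ≤ 3 * G.cliqueNum := by
  by_cases hpair : ∃ u v, Gᶜ.Adj u v
  · obtain ⟨u, v, huv⟩ := hpair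
    have hcover : (univ : Finset V) ⊆
        Gᶜ.neighborFinset u ∪ Gᶜ.neighborFinset v ∪ (G.neighborFinset u ∩ G.neighborFinset v) := by
      intro w _
      obtain ⟨hne, hnadj⟩ := (compl_adj G u v).1 huv
      simp only [mem_union, mem_inter, mem_neighborFinset, compl_adj]
      rcases eq_or_ne w u with rfl | hwu
      · simpa [hne.symm, adj_comm] using hnadj
      rcases eq_or_ne w v with rfl | hwv
      · simp [hne, hnadj]
      tauto
    have hnonnbr (t : V) : #(Gᶜ.neighborFinset t) ≤ G.cliqueNum :=
      IsClique.card_le_cliqueNum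
        (tc := by simpa using isClique_compl_neighborSet_of_compl_cliqueFree h t)
    calc Fintype.card V
        ≤ #(Gᶜ.neighborFinset u ∪ Gᶜ.neighborFinset v ∪
            (G.neighborFinset u ∩ G.neighborFinset v)) := card_le_card hcover
      _ ≤ #(Gᶜ.neighborFinset u) + #(Gᶜ.neighborFinset v) +
            #(G.neighborFinset u ∩ G.neighborFinset v) :=
          (card_union_le _ _).trans (Nat.add_le_add_right (card_union_le _ _) _)
      _ ≤ 3 * G.cliqueNum := by
          have := hC4.card_inter_neighborFinset_le_cliqueNum huv
          have := hnonnbr u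
          have := hnonnbr v
          omega
  · simp only [not_exists] at hpair
    have hcl : G.IsClique ((univ : Finset V) : Set V) := fun x _ y _ hxy => by
      simpa [compl_adj, hxy] using hpair x y
    have := IsClique.card_le_cliqueNum (tc := hcl)
    rw [card_univ] at this
    omega

theorem IsC4Free.card_le_six_mul_cliqueNum (hC4 : IsC4Free G)
    (hδ : Fintype.card V ≤ 2 * G.minDegree) : Fintype.card V ≤ 6 * G.cliqueNum := by
  by_cases h : Gᶜ.CliqueFree 3
  · have := hC4.card_le_three_mul_cliqueNum h
    omega
  · obtain ⟨s, hs⟩ : ∃ s, Gᶜ.IsNClique 3 s := by simpa [CliqueFree] using h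
    obtain ⟨x, y, z, hxy, hxz, hyz, -⟩ := is3Clique_iff.1 hs
    have := hC4.degree_add_degree_add_degree_add_three_le hxy hxz hyz
    have := G.minDegree_le_degree x
    have := G.minDegree_le_degree y
    have := G.minDegree_le_degree z
    omega

end SimpleGraph

theorem stmt11 {V : Type*} [Fintype V] (G : SimpleGraph V) [DecidableRel G.Adj]
    (hC4 : IsC4Free G) (hδ : (Fintype.card V : ℝ) / 2 ≤ (G.minDegree : ℝ)) :
    (G.cliqueNum : ℝ) ≥ (Fintype.card V : ℝ) / 12 := by
  have hδ' : Fintype.card V ≤ 2 * G.minDegree := by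
    exact_mod_cast (by linarith : (Fintype.card V : ℝ) ≤ 2 * G.minDegree)
  have h6 : (Fintype.card V : ℝ) ≤ 6 * G.cliqueNum := by
    exact_mod_cast hC4.card_le_six_mul_cliqueNum hδ'
  have : (0 : ℝ) ≤ G.cliqueNum := by positivity
  linarith
end
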